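/- Let p ≥ 1 and let m be an integer with 1 ≤ m ≤ p and m > (p+1)/2. Let N ≥ 1, L = N·m, and let S = {j·m : 0 ≤ j < N} ⊆ ZMod L be the equally spaced configuration with m − 1 empty sites between consecutive fermions. Then E(S) = N·U_m; equivalently, the energy per particle is U_m and the energy density satisfies E(S)·Q/N = Q·U_{1/Q} with Q = 1/m. (This is the paper's formula for the unperturbed ground-state energy density at the critical density Q = 1/m when m > (p+1)/2.) -/
import Mathlib


/-- Atomic-limit energy of a configuration (Fock state) `S` of occupied sites on a
periodic chain of `L` sites, with interaction range `p` and two-body potentials `U`: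
`E(S) = ∑_{i ∈ ZMod L} ∑_{m=1}^{p} U m · [i ∈ S] · [i + m ∈ S]`
(the outer sum over `ZMod L` is written via its enumeration `i = 0, …, L-1`). -/
noncomputable def energy (L p : ℕ) (U : ℕ → ℝ) (S : Finset (ZMod L)) : ℝ :=
  ∑ i ∈ Finset.range L, ∑ m ∈ Finset.Icc 1 p,
    U m * (if (i : ZMod L) ∈ S then (1 : ℝ) else 0) *
      (if (i : ZMod L) + (m : ZMod L) ∈ S then (1 : ℝ) else 0)


lemma mem_S_iff (m N : ℕ) (hm : 1 ≤ m) (hN : 1 ≤ N) (a : ℕ) :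
    ((a : ZMod (N*m)) ∈ (Finset.range N).image fun j => ((j * m : ℕ) : ZMod (N*m)))
      ↔ m ∣ a := by
  constructor
  · rintro h
    obtain ⟨j, hj, heq⟩ := Finset.mem_image.1 h
    have h1 : (j * m) ≡ a [MOD N * m] := (ZMod.natCast_eq_natCast_iff _ _ _).1 heq
    have h2 : (j * m) ≡ a [MOD m] := h1.of_dvd ⟨N, (mul_comm N m)⟩
    have h3 : 0 ≡ a [MOD m] := (Nat.modEq_zero_iff_dvd.2 ⟨j, mul_comm j m⟩).symm.trans h2
    exact (Nat.modEq_zero_iff_dvd.1 h3.symm)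
  · rintro ⟨t, rfl⟩
    apply Finset.mem_image.2 ⟨t % N, Finset.mem_range.2 (Nat.mod_lt _ hN), ?_⟩
    apply (ZMod.natCast_eq_natCast_iff _ _ _).2
    have := (Nat.mod_modEq t N).mul_right' (c := m)
    simpa [mul_comm] using this


/-- At the critical density `Q = 1/m` with `1 ≤ m ≤ p` and `m > (p+1)/2` (i.e.
`2m > p+1`), the equally spaced configuration `S = {j·m : 0 ≤ j < N}` on
`L = N·m` sites has energy `E(S) = N·U_m`; only nearest-neighbor fermion pairs (at
distance `m`) interact, so the energy per particle is `U_m`. -/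
theorem equally_spaced_energy (p m N L : ℕ) (hp : 1 ≤ p) (hm1 : 1 ≤ m) (hmp : m ≤ p)
    (hm2 : p + 1 < 2 * m) (hN : 1 ≤ N) (hL : L = N * m) (U : ℕ → ℝ) :
    energy L p U ((Finset.range N).image fun j => ((j * m : ℕ) : ZMod L))
      = (N : ℝ) * U m := by
  subst hL
  set S := (Finset.range N).image fun j => ((j * m : ℕ) : ZMod (N*m)) with hS
  have memS : ∀ a : ℕ, ((a : ZMod (N*m)) ∈ S) ↔ m ∣ a := fun a => mem_S_iff m N hm1 hN a
  have hdvd_iff : ∀ k ∈ Finset.Icc 1 p, (m ∣ k ↔ k = m) := by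
    intro k hk
    obtain ⟨hk1, hk2⟩ := Finset.mem_Icc.1 hk
    constructor
    · rintro ⟨t, rfl⟩
      have ht1 : 1 ≤ t := by
        by_contra h
        interval_cases t <;> omega
      have : t < 2 := by
        by_contra h
        push_neg at h
        have : 2 * m ≤ m * t := by nlinarith
        omega
      interval_cases t <;> omega
    · rintro rfl; exact dvd_rfl
  rw [energy]
  have step1 : ∀ i ∈ Finset.range (N*m),
      (∑ k ∈ Finset.Icc 1 p,
        U k * (if (i : ZMod (N*m)) ∈ S then (1 : ℝ) else 0) *
          (if (i : ZMod (N*m)) + (k : ZMod (N*m)) ∈ S then (1 : ℝ) else 0))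
      = if m ∣ i then U m else 0 := by
    intro i _
    by_cases hd : m ∣ i
    · rw [if_pos hd]
      have hiS : (i : ZMod (N*m)) ∈ S := (memS i).2 hd
      have : ∀ k ∈ Finset.Icc 1 p,
          U k * (if (i : ZMod (N*m)) ∈ S then (1 : ℝ) else 0) *
            (if (i : ZMod (N*m)) + (k : ZMod (N*m)) ∈ S then (1 : ℝ) else 0)
          = if k = m then U k else 0 := by
        intro k hk
        rw [if_pos hiS, mul_one]
        have hcast : (i : ZMod (N*m)) + (k : ZMod (N*m)) = ((i + k : ℕ) : ZMod (N*m)) := by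
          push_cast; ring
        rw [hcast]
        by_cases hkm : k = m
        · subst hkm
          rw [if_pos ((memS _).2 (Nat.dvd_add hd dvd_rfl)), if_pos rfl, mul_one]
        · have : ¬ m ∣ (i + k) := by
            intro h
            exact hkm ((hdvd_iff k hk).1 ((Nat.dvd_add_right hd).1 h))
          rw [if_neg (fun h => this ((memS _).1 h)), if_neg hkm, mul_zero]
      rw [Finset.sum_congr rfl this, Finset.sum_ite_eq' (Finset.Icc 1 p) m U,
        if_pos (Finset.mem_Icc.2 ⟨hm1, hmp⟩)]
    · rw [if_neg hd]
      apply Finset.sum_eq_zero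
      intro k _
      have : (i : ZMod (N*m)) ∉ S := fun h => hd ((memS i).1 h)
      rw [if_neg this, mul_zero, zero_mul]
  rw [Finset.sum_congr rfl step1, ← Finset.sum_filter]
  have hfilter : (Finset.range (N*m)).filter (fun i => m ∣ i)
      = (Finset.range N).image (· * m) := by
    ext i
    simp only [Finset.mem_filter, Finset.mem_range, Finset.mem_image]
    constructor
    · rintro ⟨hi, t, rfl⟩
      exact ⟨t, by nlinarith [hm1], by ring⟩
    · rintro ⟨j, hj, rfl⟩
      exact ⟨by nlinarith, ⟨j, mul_comm j m⟩⟩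
  rw [hfilter, Finset.sum_const, Finset.card_image_of_injective _
    (fun a b h => Nat.eq_of_mul_eq_mul_right hm1 h), Finset.card_range,
    nsmul_eq_mul]
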